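/- Mehler's formula in monic normalization: for any scalar $\rho$, $\sum_{n\ge 0}\frac{2^n}{n!}H_n(\rho)\,H_n(x)\,t^n=\dfrac{1}{\sqrt{1-t^2}}\exp\Big(\dfrac{2x\rho t-(x^2+\rho^2)t^2}{1-t^2}\Big)$, valid for $|t|<1$ (or as formal power series in $t$). -/

import Mathlib

/-!
Both sides satisfy the linear ODE `(1 - t²)² y' = (2xρ(1 + t²) + (1 - 2(x² + ρ²)) t - t³) y`
on `(-1, 1)` and equal `1` at `t = 0`, so their ratio is constant. For the closed form this is a
direct computation. For the series `∑ aₙ tⁿ`, `aₙ = 2ⁿ/n! Hₙ(ρ) Hₙ(x)`, it amounts to a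
five-term recurrence for `aₙ`, obtained by expanding everything through the three-term
recurrence of `Hₙ`. Termwise differentiation on `(-1, 1)` is justified by
`2ⁿ/n! Hₙ(x)² = O(Λⁿ)` for every `Λ > 1`, which again follows from the three-term recurrence.
-/

open Finset

/-- Monic Hermite polynomials: `x H_n = H_{n+1} + (n/2) H_{n-1}`, `H_0 = 1`, `H_1 = X`. -/
noncomputable def hermiteM : ℕ → Polynomial ℝ
  | 0 => 1
  | 1 => Polynomial.X
  | (n + 2) => Polynomial.X * hermiteM (n + 1) - Polynomial.C (((n : ℝ) + 1) / 2) * hermiteM n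

theorem exists_le_mul_pow_of_le_add {u : ℕ → ℝ} {α β Λ : ℝ} (hΛ : 0 < Λ) (hα : 0 ≤ α)
    (hβ : 0 ≤ β) (hαβ : α * Λ + β ≤ Λ ^ 2) {N : ℕ}
    (hu : ∀ n ≥ N, u (n + 2) ≤ α * u (n + 1) + β * u n) :
    ∃ C, ∀ n, u n ≤ C * Λ ^ n := by
  set C := ∑ k ∈ range (N + 2), |u k| / Λ ^ k
  have hC : 0 ≤ C := sum_nonneg fun k _ => by positivity
  have base : ∀ k < N + 2, u k ≤ C * Λ ^ k := fun k hk => by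
    have hle := single_le_sum (f := fun k => |u k| / Λ ^ k) (fun k _ => by positivity)
      (mem_range.mpr hk)
    calc u k ≤ |u k| / Λ ^ k * Λ ^ k := by
          rw [div_mul_cancel₀ _ (by positivity)]; exact le_abs_self _
      _ ≤ C * Λ ^ k := by gcongr
  have pair : ∀ n, u n ≤ C * Λ ^ n ∧ u (n + 1) ≤ C * Λ ^ (n + 1) := by
    intro n
    induction n with
    | zero => exact ⟨base 0 (by omega), base 1 (by omega)⟩
    | succ n ih =>
      refine ⟨ih.2, ?_⟩
      rcases lt_or_ge (n + 2) (N + 2) with h | h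
      · exact base _ h
      · calc u (n + 2) ≤ α * (C * Λ ^ (n + 1)) + β * (C * Λ ^ n) := by
              grw [hu n (by omega), ih.1, ih.2]
          _ = C * Λ ^ n * (α * Λ + β) := by ring
          _ ≤ C * Λ ^ n * Λ ^ 2 := by gcongr
          _ = C * Λ ^ (n + 1 + 1) := by ring
  exact ⟨C, fun n => (pair n).1⟩

theorem sub_sq_le_one_add_inv_mul_sq_add {δ : ℝ} (hδ : 0 < δ) (a b : ℝ) :
    (a - b) ^ 2 ≤ (1 + δ⁻¹) * a ^ 2 + (1 + δ) * b ^ 2 := by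
  have h : (1 + δ⁻¹) * a ^ 2 + (1 + δ) * b ^ 2 - (a - b) ^ 2 = (a + δ * b) ^ 2 / δ := by
    field_simp; ring
  nlinarith [div_nonneg (sq_nonneg (a + δ * b)) hδ.le]

def shiftRight (k : ℕ) (u : ℕ → ℝ) (n : ℕ) : ℝ := if k ≤ n then u (n - k) else 0

theorem HasSum.shiftRight_mul_pow {u : ℕ → ℝ} {t s : ℝ} (h : HasSum (fun n => u n * t ^ n) s)
    (k : ℕ) : HasSum (fun n => shiftRight k u n * t ^ n) (t ^ k * s) := by
  have hshift : (fun n => shiftRight k u (n + k) * t ^ (n + k))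
      = fun n => t ^ k * (u n * t ^ n) := by
    funext n
    simp only [shiftRight, le_add_self, if_true, Nat.add_sub_cancel, pow_add]
    ring
  refine (Function.Injective.hasSum_iff (add_left_injective k) fun n hn => ?_).mp ?_
  · have : ¬ k ≤ n := fun hk => hn ⟨n - k, Nat.sub_add_cancel hk⟩
    simp [shiftRight, this]
  · exact (congrArg (HasSum · _) hshift).mpr (h.mul_left (t ^ k))

theorem div_eq_div_of_hasDerivAt_eq_mul {f g k : ℝ → ℝ} {s : Set ℝ} (hs : IsOpen s)
    (hs' : IsPreconnected s) (hf : ∀ t ∈ s, HasDerivAt f (k t * f t) t)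
    (hg : ∀ t ∈ s, HasDerivAt g (k t * g t) t) (hg0 : ∀ t ∈ s, g t ≠ 0) {a b : ℝ}
    (ha : a ∈ s) (hb : b ∈ s) : f a / g a = f b / g b := by
  have hq : ∀ t ∈ s, HasDerivAt (f / g) 0 t := fun t ht =>
    ((hf t ht).div (hg t ht) (hg0 t ht)).congr_deriv (by ring)
  exact hs.is_const_of_deriv_eq_zero hs'
    (fun t ht => (hq t ht).differentiableAt.differentiableWithinAt) (fun t ht => (hq t ht).deriv)
    ha hb

section PowerSeries

variable {a : ℕ → ℝ}

theorem summable_pow_mul_abs_mul_pow (ha : ∀ Λ > 1, ∃ C, ∀ n, |a n| ≤ C * Λ ^ n) (k : ℕ)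
    {r : ℝ} (hr0 : 0 ≤ r) (hr : r < 1) : Summable fun n : ℕ => (n : ℝ) ^ k * |a n| * r ^ n := by
  obtain ⟨C, hC⟩ := ha (2 / (1 + r)) (by rw [gt_iff_lt, one_lt_div (by linarith)]; linarith)
  have hq : ‖2 / (1 + r) * r‖ < 1 := by
    rw [Real.norm_of_nonneg (by positivity), div_mul_eq_mul_div, div_lt_one (by linarith)]
    linarith
  refine .of_nonneg_of_le (fun n => by positivity) (fun n => ?_)
    ((summable_pow_mul_geometric_of_norm_lt_one k hq).mul_left C)
  calc (n : ℝ) ^ k * |a n| * r ^ n ≤ (n : ℝ) ^ k * (C * (2 / (1 + r)) ^ n) * r ^ n := by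
        gcongr; exact hC n
    _ = C * ((n : ℝ) ^ k * (2 / (1 + r) * r) ^ n) := by ring

theorem summable_mul_pow (ha : ∀ Λ > 1, ∃ C, ∀ n, |a n| ≤ C * Λ ^ n) {t : ℝ} (ht : |t| < 1) :
    Summable fun n => a n * t ^ n :=
  .of_norm <| by simpa [abs_mul, abs_pow] using summable_pow_mul_abs_mul_pow ha 0 (abs_nonneg t) ht

def derivCoeff (a : ℕ → ℝ) (n : ℕ) : ℝ := (n + 1) * a (n + 1)

theorem exists_hasSum_derivCoeff_hasDerivAt (ha : ∀ Λ > 1, ∃ C, ∀ n, |a n| ≤ C * Λ ^ n)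
    {t : ℝ} (ht : |t| < 1) :
    ∃ D, HasSum (fun n => derivCoeff a n * t ^ n) D ∧
      HasDerivAt (fun z => ∑' n, a n * z ^ n) D t := by
  obtain ⟨r, htr, hr1⟩ := exists_between ht
  have hr0 : 0 < r := (abs_nonneg t).trans_lt htr
  have hu : Summable fun n : ℕ => (n : ℝ) * |a n| * r ^ (n - 1) := by
    refine ((summable_pow_mul_abs_mul_pow ha 1 hr0.le hr1).mul_left r⁻¹).congr fun n => ?_
    rcases n with _ | n
    · simp
    · rw [pow_one, Nat.add_sub_cancel, pow_succ]
      field_simp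
  have hbound : ∀ n, ∀ y ∈ Metric.ball (0 : ℝ) r,
      ‖a n * (n * y ^ (n - 1))‖ ≤ (n : ℝ) * |a n| * r ^ (n - 1) := fun n y hy => by
    rw [mem_ball_zero_iff, Real.norm_eq_abs] at hy
    rw [Real.norm_eq_abs, abs_mul, abs_mul, abs_pow, Nat.abs_cast]
    calc |a n| * (n * |y| ^ (n - 1)) ≤ |a n| * (n * r ^ (n - 1)) := by gcongr
      _ = (n : ℝ) * |a n| * r ^ (n - 1) := by ring
  have htmem : t ∈ Metric.ball (0 : ℝ) r := by rwa [mem_ball_zero_iff, Real.norm_eq_abs]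
  have hderiv := hasDerivAt_tsum_of_isPreconnected hu Metric.isOpen_ball
    (convex_ball 0 r).isPreconnected (fun (n : ℕ) y _ => (hasDerivAt_pow n y).const_mul (a n))
    hbound htmem (summable_mul_pow ha ht) htmem
  refine ⟨_, ?_, hderiv⟩
  have hsum := (Summable.of_norm_bounded hu fun n => hbound n t htmem).hasSum
  simpa [derivCoeff, mul_comm, mul_left_comm] using (hasSum_nat_add_iff' 1).mpr hsum

end PowerSeries

theorem eval_hermiteM_add_two (x : ℝ) (n : ℕ) :
    (hermiteM (n + 2)).eval x
      = x * (hermiteM (n + 1)).eval x - ((n : ℝ) + 1) / 2 * (hermiteM n).eval x := by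
  simp [hermiteM]

theorem exists_two_pow_div_factorial_mul_sq_eval_hermiteM_le (x : ℝ) {Λ : ℝ} (hΛ : 1 < Λ) :
    ∃ C, ∀ n, 2 ^ n / (n.factorial : ℝ) * (hermiteM n).eval x ^ 2 ≤ C * Λ ^ n := by
  obtain ⟨δ, hδ, rfl⟩ : ∃ δ, 0 < δ ∧ Λ = 1 + δ := ⟨Λ - 1, by linarith, by ring⟩
  obtain ⟨N, hN⟩ := exists_nat_ge (2 * (1 + δ⁻¹) * x ^ 2 / δ)
  refine exists_le_mul_pow_of_le_add (α := δ) (β := 1 + δ) (by positivity) hδ.le (by positivity)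
    (le_of_eq (by ring)) (N := N) fun n hn => ?_
  set E := fun n => 2 ^ n / (n.factorial : ℝ) * (hermiteM n).eval x ^ 2
  have hcoeff : 2 * (1 + δ⁻¹) * x ^ 2 / (n + 2) ≤ δ := by
    rw [div_le_iff₀ (by positivity)]
    have : (N : ℝ) ≤ n := by exact_mod_cast hn
    rw [div_le_iff₀ hδ] at hN
    nlinarith
  have hratio : (1 + δ) * (n + 1) / (n + 2) ≤ 1 + δ := by
    rw [div_le_iff₀ (by positivity)]; nlinarith
  calc E (n + 2) = 2 ^ n / (n.factorial : ℝ) * (4 / ((n + 1) * (n + 2)))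
        * (x * (hermiteM (n + 1)).eval x - ((n : ℝ) + 1) / 2 * (hermiteM n).eval x) ^ 2 := by
        simp only [E, eval_hermiteM_add_two, Nat.factorial_succ]; push_cast; field_simp; ring
    _ ≤ 2 ^ n / (n.factorial : ℝ) * (4 / ((n + 1) * (n + 2)))
        * ((1 + δ⁻¹) * (x * (hermiteM (n + 1)).eval x) ^ 2
          + (1 + δ) * (((n : ℝ) + 1) / 2 * (hermiteM n).eval x) ^ 2) := by
        gcongr; exact sub_sq_le_one_add_inv_mul_sq_add hδ _ _
    _ = 2 * (1 + δ⁻¹) * x ^ 2 / (n + 2) * E (n + 1) + (1 + δ) * (n + 1) / (n + 2) * E n := by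
        simp only [E, Nat.factorial_succ]; push_cast; field_simp; ring
    _ ≤ δ * E (n + 1) + (1 + δ) * E n := by gcongr

noncomputable def mehlerCoeff (ρ x : ℝ) (n : ℕ) : ℝ :=
  2 ^ n / (n.factorial : ℝ) * (hermiteM n).eval ρ * (hermiteM n).eval x

theorem exists_abs_mehlerCoeff_le (ρ x : ℝ) :
    ∀ Λ > 1, ∃ C, ∀ n, |mehlerCoeff ρ x n| ≤ C * Λ ^ n := fun Λ hΛ => by
  obtain ⟨Cρ, hρ⟩ := exists_two_pow_div_factorial_mul_sq_eval_hermiteM_le ρ hΛ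
  obtain ⟨Cx, hx⟩ := exists_two_pow_div_factorial_mul_sq_eval_hermiteM_le x hΛ
  refine ⟨(Cρ + Cx) / 2, fun n => ?_⟩
  have hamgm := two_mul_le_add_sq |(hermiteM n).eval ρ| |(hermiteM n).eval x|
  rw [sq_abs, sq_abs] at hamgm
  calc |mehlerCoeff ρ x n|
      = 2 ^ n / (n.factorial : ℝ) * |(hermiteM n).eval ρ| * |(hermiteM n).eval x| := by
        rw [mehlerCoeff, abs_mul, abs_mul, abs_of_nonneg (by positivity)]
    _ ≤ (2 ^ n / (n.factorial : ℝ) * (hermiteM n).eval ρ ^ 2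
          + 2 ^ n / (n.factorial : ℝ) * (hermiteM n).eval x ^ 2) / 2 := by
        rw [mul_assoc, ← mul_add, mul_div_assoc]
        gcongr
        linarith
    _ ≤ (Cρ + Cx) / 2 * Λ ^ n := by linarith [hρ n, hx n]

/-- The coefficient of `tⁿ` in `(1 - t²)² f' = (2xρ(1 + t²) + (1 - 2(x² + ρ²)) t - t³) f`. -/
theorem mehlerCoeff_ode (ρ x : ℝ) (n : ℕ) :
    derivCoeff (mehlerCoeff ρ x) n - 2 * shiftRight 2 (derivCoeff (mehlerCoeff ρ x)) n
        + shiftRight 4 (derivCoeff (mehlerCoeff ρ x)) n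
      = 2 * x * ρ * (mehlerCoeff ρ x n + shiftRight 2 (mehlerCoeff ρ x) n)
        + (1 - 2 * (x ^ 2 + ρ ^ 2)) * shiftRight 1 (mehlerCoeff ρ x) n
        - shiftRight 3 (mehlerCoeff ρ x) n := by
  obtain hn | ⟨m, rfl⟩ : n < 4 ∨ ∃ m, n = m + 4 := by
    rcases lt_or_ge n 4 with h | h
    exacts [.inl h, .inr ⟨n - 4, by omega⟩]
  · interval_cases n <;>
      simp [shiftRight, derivCoeff, mehlerCoeff, hermiteM, Nat.factorial] <;> ring
  · simp only [shiftRight, derivCoeff, le_add_self, if_true, (by omega : 1 ≤ m + 4),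
      (by omega : 2 ≤ m + 4), (by omega : 3 ≤ m + 4), show m + 4 - 1 = m + 3 by omega,
      show m + 4 - 2 = m + 2 by omega, show m + 4 - 3 = m + 1 by omega,
      show m + 4 - 4 = m by omega, mehlerCoeff, eval_hermiteM_add_two, Nat.factorial_succ]
    push_cast
    field_simp
    ring

noncomputable def mehlerSeries (ρ x t : ℝ) : ℝ := ∑' n, mehlerCoeff ρ x n * t ^ n

noncomputable def mehlerKernel (ρ x t : ℝ) : ℝ :=
  1 / Real.sqrt (1 - t ^ 2) * Real.exp ((2 * x * ρ * t - (x ^ 2 + ρ ^ 2) * t ^ 2) / (1 - t ^ 2))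

noncomputable def mehlerLogDeriv (ρ x t : ℝ) : ℝ :=
  (2 * x * ρ * (1 + t ^ 2) + (1 - 2 * (x ^ 2 + ρ ^ 2)) * t - t ^ 3) / (1 - t ^ 2) ^ 2

theorem hasDerivAt_mehlerSeries (ρ x : ℝ) {t : ℝ} (ht : |t| < 1) :
    HasDerivAt (mehlerSeries ρ x) (mehlerLogDeriv ρ x t * mehlerSeries ρ x t) t := by
  obtain ⟨D, hD, hderiv⟩ := exists_hasSum_derivCoeff_hasDerivAt (exists_abs_mehlerCoeff_le ρ x) ht
  have hL := (summable_mul_pow (exists_abs_mehlerCoeff_le ρ x) ht).hasSum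
  have hlhs := (hD.sub ((hD.shiftRight_mul_pow 2).mul_left 2)).add (hD.shiftRight_mul_pow 4)
  have hrhs := ((((hL.add (hL.shiftRight_mul_pow 2)).mul_left (2 * x * ρ)).add
    ((hL.shiftRight_mul_pow 1).mul_left (1 - 2 * (x ^ 2 + ρ ^ 2)))).sub (hL.shiftRight_mul_pow 3))
  have hode : D - 2 * (t ^ 2 * D) + t ^ 4 * D
      = 2 * x * ρ * (mehlerSeries ρ x t + t ^ 2 * mehlerSeries ρ x t)
        + (1 - 2 * (x ^ 2 + ρ ^ 2)) * (t ^ 1 * mehlerSeries ρ x t)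
        - t ^ 3 * mehlerSeries ρ x t := by
    refine hlhs.unique (hrhs.congr_fun fun n => ?_)
    linear_combination t ^ n * mehlerCoeff_ode ρ x n
  have h1 : 1 - t ^ 2 ≠ 0 := by nlinarith [(sq_lt_one_iff_abs_lt_one t).mpr ht]
  refine hderiv.congr_deriv ?_
  rw [mehlerLogDeriv]
  field_simp
  linear_combination hode

theorem mehlerKernel_pos (ρ x : ℝ) {t : ℝ} (ht : |t| < 1) : 0 < mehlerKernel ρ x t := by
  have : 0 < 1 - t ^ 2 := by nlinarith [(sq_lt_one_iff_abs_lt_one t).mpr ht]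
  unfold mehlerKernel; positivity

theorem hasDerivAt_mehlerKernel (ρ x : ℝ) {t : ℝ} (ht : |t| < 1) :
    HasDerivAt (mehlerKernel ρ x) (mehlerLogDeriv ρ x t * mehlerKernel ρ x t) t := by
  have h1 : 0 < 1 - t ^ 2 := by nlinarith [(sq_lt_one_iff_abs_lt_one t).mpr ht]
  have hq : HasDerivAt (fun z => 1 - z ^ 2) (-(2 * t)) t := by
    simpa using (hasDerivAt_pow 2 t).const_sub 1
  have hp : HasDerivAt (fun z => 2 * x * ρ * z - (x ^ 2 + ρ ^ 2) * z ^ 2)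
      (2 * x * ρ - (x ^ 2 + ρ ^ 2) * (2 * t)) t := by
    simpa using ((hasDerivAt_id' t).const_mul (2 * x * ρ)).fun_sub
      ((hasDerivAt_pow 2 t).const_mul (x ^ 2 + ρ ^ 2))
  have h := ((hasDerivAt_const t (1 : ℝ)).fun_div (hq.sqrt h1.ne')
    (Real.sqrt_pos.mpr h1).ne').fun_mul (hp.fun_div hq h1.ne').exp
  refine h.congr_deriv ?_
  have hs := Real.sq_sqrt h1.le
  rw [mehlerLogDeriv, mehlerKernel]
  field_simp
  linear_combination (t ^ 3 - t) * hs

theorem mehlerSeries_zero (ρ x : ℝ) : mehlerSeries ρ x 0 = 1 := by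
  rw [mehlerSeries, tsum_eq_single 0 fun n hn => by simp [hn]]
  simp [mehlerCoeff, hermiteM]

theorem mehlerKernel_zero (ρ x : ℝ) : mehlerKernel ρ x 0 = 1 := by
  simp [mehlerKernel]

/-- Mehler's formula in monic normalization. -/
theorem stmt10 (ρ x t : ℝ) (ht : |t| < 1) :
    HasSum (fun n => (2 : ℝ) ^ n / (n.factorial : ℝ) *
        (hermiteM n).eval ρ * (hermiteM n).eval x * t ^ n)
      (1 / Real.sqrt (1 - t ^ 2) *
        Real.exp ((2 * x * ρ * t - (x ^ 2 + ρ ^ 2) * t ^ 2) / (1 - t ^ 2))) := by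
  have hratio := div_eq_div_of_hasDerivAt_eq_mul isOpen_Ioo isPreconnected_Ioo
    (fun s hs => hasDerivAt_mehlerSeries ρ x (abs_lt.mpr hs))
    (fun s hs => hasDerivAt_mehlerKernel ρ x (abs_lt.mpr hs))
    (fun s hs => (mehlerKernel_pos ρ x (abs_lt.mpr hs)).ne')
    (abs_lt.mp ht) (by norm_num : (0 : ℝ) ∈ Set.Ioo (-1) 1)
  rw [mehlerSeries_zero, mehlerKernel_zero, div_one,
    div_eq_one_iff_eq (mehlerKernel_pos ρ x ht).ne'] at hratio
  have hsum := (summable_mul_pow (exists_abs_mehlerCoeff_le ρ x) ht).hasSum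
  rw [← mehlerSeries, hratio] at hsum
  exact hsum
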